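/- arXiv:1904.04097 — 6 statements merged into one kernel-verified Lean document; each statement's English description precedes it below -/
import Mathlib

section
/- Let B and E be small categories and p : E ⥤ B a functor. Then p is a discrete fibration if and only if the commutative square of categories and functors whose top edge is the induced functor p^→ : Arrow(E) ⥤ Arrow(B) on arrow categories, whose vertical edges are the codomain functors cod : Arrow(E) ⥤ E and cod : Arrow(B) ⥤ B, and whose bottom edge is p : E ⥤ B, is a pullback square in the category Cat of small categories. -/
/-!
A commutative square of categories is a pullback in `Cat` exactly when functors into its corner
correspond to compatible pairs of functors into its two legs. Testing against the terminal
category, this forces the square to be a pullback on objects; conversely, a square that is a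
pullback both on objects and on morphisms has this universal property.

For the square formed by `p^→`, the two codomain functors and `p`, being a pullback on objects
says that every `f : b ⟶ p e` has a unique lift with codomain `e`, i.e. that `p` is a discrete
fibration. Being a pullback on morphisms then comes for free: to lift a commutative square of `B`
whose vertical edges are already lifted, lift its top edge; uniqueness of lifts of the diagonal
shows that the lifted square commutes, and faithfulness of `p` makes the lift unique.
-/

open CategoryTheory

universe u

/-- A functor `p : E ⥤ B` is a discrete fibration if for every object `e` of `E` and every
morphism `f : b ⟶ p.obj e` in `B` there is a unique pair `(e', g : e' ⟶ e)` with
`p.obj e' = b` and `p.map g = f` (up to the identification `p.obj e' = b`). -/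
def IsDiscreteFibration {E B : Type*} [Category E] [Category B] (p : E ⥤ B) : Prop :=
  ∀ {e : E} {b : B} (f : b ⟶ p.obj e),
    ∃! eg : Σ e' : E, e' ⟶ e,
      ∃ h : p.obj eg.1 = b, p.map eg.2 = eqToHom h ≫ f

namespace CategoryTheory

theorem Functor.fromPUnit_comp {C D : Type*} [Category C] [Category D] (x : C) (F : C ⥤ D) :
    fromPUnit.{u} x ⋙ F = fromPUnit (F.obj x) :=
  Functor.ext (fun _ => rfl) (by simp)

section StrictPullback

/- `hobj` and `hmap` say that the square `T, L, R, Q` is a pullback square of sets of objects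
and of sets of morphisms. -/
variable {P A C D : Type*} [Category P] [Category A] [Category C] [Category D]
  {T : P ⥤ A} {L : P ⥤ C} {R : A ⥤ D} {Q : C ⥤ D} (w : T ⋙ R = L ⋙ Q)
  (hobj : ∀ a c, R.obj a = Q.obj c → ∃! x, T.obj x = a ∧ L.obj x = c)
  (hmap : ∀ {x y : P} (α : T.obj x ⟶ T.obj y) (β : L.obj x ⟶ L.obj y),
    R.map α ≍ Q.map β → ∃! γ : x ⟶ y, T.map γ = α ∧ L.map γ = β)

include w hobj in
theorem strictPullback_obj_ext {x y : P} (hT : T.obj x = T.obj y) (hL : L.obj x = L.obj y) :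
    x = y :=
  (hobj _ _ (Functor.congr_obj w y)).unique ⟨hT, hL⟩ ⟨rfl, rfl⟩

include w hmap in
theorem strictPullback_hom_ext {x y : P} {γ γ' : x ⟶ y} (hT : T.map γ = T.map γ')
    (hL : L.map γ = L.map γ') : γ = γ' :=
  (hmap _ _ (Functor.hcongr_hom w γ')).unique ⟨hT, hL⟩ ⟨rfl, rfl⟩

include w hobj hmap

theorem strictPullback_functor_ext {X : Type*} [Category X] {K₁ K₂ : X ⥤ P}
    (hT : K₁ ⋙ T = K₂ ⋙ T) (hL : K₁ ⋙ L = K₂ ⋙ L) : K₁ = K₂ := by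
  refine Functor.ext (fun c => strictPullback_obj_ext w hobj
    (Functor.congr_obj hT c) (Functor.congr_obj hL c))
    fun c c' φ => strictPullback_hom_ext w hmap ?_ ?_
  · rw [← Functor.comp_map K₁, Functor.congr_hom hT φ]
    simp [eqToHom_map]
  · rw [← Functor.comp_map K₁, Functor.congr_hom hL φ]
    simp [eqToHom_map]

theorem existsUnique_strictPullback_lift {X : Type*} [Category X] (F : X ⥤ A) (G : X ⥤ C)
    (h : F ⋙ R = G ⋙ Q) : ∃! K : X ⥤ P, K ⋙ T = F ∧ K ⋙ L = G := by
  choose x hxT hxL using fun c => (hobj _ _ (Functor.congr_obj h c)).exists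
  have hγ : ∀ {c c'} (φ : c ⟶ c'), ∃ γ : x c ⟶ x c',
      T.map γ = eqToHom (hxT c) ≫ F.map φ ≫ eqToHom (hxT c').symm ∧
      L.map γ = eqToHom (hxL c) ≫ G.map φ ≫ eqToHom (hxL c').symm := fun φ => by
    refine (hmap _ _ ?_).exists
    simpa [eqToHom_map] using Functor.hcongr_hom h φ
  choose γ hγT hγL using @hγ
  let K : X ⥤ P :=
    { obj := x
      map := γ
      map_id c := strictPullback_hom_ext w hmap (by simp [hγT]) (by simp [hγL])
      map_comp φ ψ := strictPullback_hom_ext w hmap (by simp [hγT]) (by simp [hγL]) }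
  have hKT : K ⋙ T = F := Functor.ext hxT fun _ _ φ => hγT φ
  have hKL : K ⋙ L = G := Functor.ext hxL fun _ _ φ => hγL φ
  exact ⟨K, ⟨hKT, hKL⟩, fun K' hK' =>
    strictPullback_functor_ext w hobj hmap (hK'.1.trans hKT.symm) (hK'.2.trans hKL.symm)⟩

end StrictPullback

namespace Cat

open Limits

variable {P A C D : Type u} [SmallCategory P] [SmallCategory A] [SmallCategory C]
  [SmallCategory D] {T : P ⥤ A} {L : P ⥤ C} {R : A ⥤ D} {Q : C ⥤ D}

theorem isPullback_iff_existsUnique_lift (w : T ⋙ R = L ⋙ Q) :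
    IsPullback T.toCatHom L.toCatHom R.toCatHom Q.toCatHom ↔
      ∀ (X : Type u) [SmallCategory X] (F : X ⥤ A) (G : X ⥤ C), F ⋙ R = G ⋙ Q →
        ∃! K : X ⥤ P, K ⋙ T = F ∧ K ⋙ L = G := by
  constructor
  · intro hP X _ F G h
    have hfst := hP.lift_fst F.toCatHom G.toCatHom (Cat.ext h)
    have hsnd := hP.lift_snd F.toCatHom G.toCatHom (Cat.ext h)
    refine ⟨(hP.lift F.toCatHom G.toCatHom (Cat.ext h)).toFunctor,
      ⟨congrArg Hom.toFunctor hfst, congrArg Hom.toFunctor hsnd⟩, ?_⟩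
    rintro K ⟨hKT, hKL⟩
    exact congrArg Hom.toFunctor (hP.hom_ext (k := K.toCatHom)
      ((Cat.ext hKT : K.toCatHom ≫ T.toCatHom = F.toCatHom).trans hfst.symm)
      ((Cat.ext hKL : K.toCatHom ≫ L.toCatHom = G.toCatHom).trans hsnd.symm))
  · intro hlift
    have hs (s : PullbackCone R.toCatHom Q.toCatHom) :=
      hlift s.pt s.fst.toFunctor s.snd.toFunctor (congrArg Hom.toFunctor s.condition)
    exact IsPullback.of_isLimit (PullbackCone.IsLimit.mk
      (Cat.ext w : T.toCatHom ≫ R.toCatHom = L.toCatHom ≫ Q.toCatHom)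
      (fun s => (hs s).exists.choose.toCatHom)
      (fun s => Cat.ext (hs s).exists.choose_spec.1)
      (fun s => Cat.ext (hs s).exists.choose_spec.2)
      (fun s K hKT hKL => Cat.ext ((hs s).unique
        ⟨congrArg Hom.toFunctor hKT, congrArg Hom.toFunctor hKL⟩ (hs s).exists.choose_spec)))

theorem existsUnique_obj_of_forall_existsUnique_lift
    (hlift : ∀ (X : Type u) [SmallCategory X] (F : X ⥤ A) (G : X ⥤ C), F ⋙ R = G ⋙ Q →
      ∃! K : X ⥤ P, K ⋙ T = F ∧ K ⋙ L = G)
    (a : A) (c : C) (hac : R.obj a = Q.obj c) : ∃! x, T.obj x = a ∧ L.obj x = c := by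
  obtain ⟨K, ⟨hKT, hKL⟩, hK⟩ := hlift (Discrete PUnit.{u + 1}) (Functor.fromPUnit a)
    (Functor.fromPUnit c) (by rw [Functor.fromPUnit_comp, Functor.fromPUnit_comp, hac])
  refine ⟨K.obj ⟨⟨⟩⟩, ⟨Functor.congr_obj hKT _, Functor.congr_obj hKL _⟩, ?_⟩
  rintro x ⟨rfl, rfl⟩
  exact Functor.congr_obj (hK (Functor.fromPUnit x)
    ⟨Functor.fromPUnit_comp x T, Functor.fromPUnit_comp x L⟩) ⟨⟨⟩⟩

end Cat

theorem Functor.mapArrow_obj_mk_eq_mk_iff {E B : Type*} [Category E] [Category B]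
    (p : E ⥤ B) {x e : E} {b : B} (g : x ⟶ e) (f : b ⟶ p.obj e) :
    p.mapArrow.obj (Arrow.mk g) = Arrow.mk f ↔ ∃ h : p.obj x = b, p.map g = eqToHom h ≫ f := by
  simp [Arrow.mk_eq_mk_iff]

end CategoryTheory

section DiscreteFibration

variable {E B : Type*} [Category E] [Category B] {p : E ⥤ B}

theorem isDiscreteFibration_iff_existsUnique_arrow : IsDiscreteFibration p ↔
    ∀ (f : Arrow B) (e : E), f.right = p.obj e →
      ∃! X : Arrow E, p.mapArrow.obj X = f ∧ X.right = e := by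
  constructor
  · rintro hp ⟨b, _, f⟩ e rfl
    obtain ⟨⟨x, g⟩, hg, huniq⟩ := hp f
    refine ⟨Arrow.mk g, ⟨(p.mapArrow_obj_mk_eq_mk_iff g f).2 hg, rfl⟩, ?_⟩
    rintro ⟨y, _, g'⟩ ⟨hg', rfl⟩
    cases huniq ⟨y, g'⟩ ((p.mapArrow_obj_mk_eq_mk_iff g' f).1 hg')
    rfl
  · intro h e b f
    obtain ⟨X, ⟨hX, rfl⟩, huniq⟩ := h (Arrow.mk f) e rfl
    refine ⟨⟨X.left, X.hom⟩, (p.mapArrow_obj_mk_eq_mk_iff X.hom f).1 hX, ?_⟩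
    rintro ⟨y, g⟩ hg
    obtain ⟨rfl, -, rfl⟩ := (Arrow.mk_eq_mk_iff g X.hom).1
      (huniq (Arrow.mk g) ⟨(p.mapArrow_obj_mk_eq_mk_iff g f).2 hg, rfl⟩)
    simp

namespace IsDiscreteFibration

theorem faithful (hp : IsDiscreteFibration p) : p.Faithful where
  map_injective {_ _} u₁ u₂ h :=
    eq_of_heq (Sigma.mk.inj ((hp (p.map u₂)).unique (y₁ := ⟨_, u₁⟩) (y₂ := ⟨_, u₂⟩)
      ⟨rfl, by simpa using h⟩ ⟨rfl, by simp⟩)).2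

theorem existsUnique_arrowHom_lift (hp : IsDiscreteFibration p) {X Y : Arrow E}
    (α : p.mapArrow.obj X ⟶ p.mapArrow.obj Y) (β : X.right ⟶ Y.right) (hαβ : α.right = p.map β) :
    ∃! γ : X ⟶ Y, p.mapArrow.map γ = α ∧ γ.right = β := by
  have hobj := isDiscreteFibration_iff_existsUnique_arrow.1 hp
  have := hp.faithful
  refine existsUnique_of_exists_of_unique ?_ ?_
  · -- `α.left` only has this type up to unfolding `p.mapArrow`, which `simp` does not see through
    obtain ⟨a, ha⟩ : ∃ a : p.obj X.left ⟶ p.obj Y.left, α.left = a := ⟨_, rfl⟩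
    have hw : a ≫ p.map Y.hom = p.map X.hom ≫ p.map β := ha ▸ hαβ ▸ Arrow.w α
    obtain ⟨⟨x, u⟩, ⟨hx, hu⟩, -⟩ := hp a
    have hmk : Arrow.mk (u ≫ Y.hom) = Arrow.mk (X.hom ≫ β) := by
      refine (hobj (Arrow.mk (p.map (X.hom ≫ β))) Y.right rfl).unique ⟨?_, rfl⟩ ⟨rfl, rfl⟩
      refine (p.mapArrow_obj_mk_eq_mk_iff _ _).2 ⟨hx, ?_⟩
      simp [hu, hw]
    obtain ⟨rfl, _, hsq⟩ := (Arrow.mk_eq_mk_iff _ _).1 hmk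
    simp only [eqToHom_refl, Category.id_comp, Category.comp_id] at hu hsq
    exact ⟨Arrow.homMk u β hsq, Arrow.hom_ext _ _ (hu.trans ha.symm) hαβ.symm, rfl⟩
  · rintro γ₁ γ₂ ⟨h₁, hr₁⟩ ⟨h₂, hr₂⟩
    refine Arrow.hom_ext _ _ (p.map_injective ?_) (hr₁.trans hr₂.symm)
    exact congrArg Arrow.Hom.left (h₁.trans h₂.symm)

end IsDiscreteFibration

end DiscreteFibration

/-- `p : E ⥤ B` is a discrete fibration iff the square with top edge `p^→` on arrow
categories, vertical edges the codomain functors, and bottom edge `p`, is a pullback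
square in `Cat`. -/
theorem discreteFibration_iff_arrow_square_isPullback
    {B E : Type u} [SmallCategory B] [SmallCategory E] (p : E ⥤ B) :
    IsDiscreteFibration p ↔
      IsPullback (C := Cat.{u, u})
        (show Cat.of (Arrow E) ⟶ Cat.of (Arrow B) from p.mapArrow.toCatHom)
        (show Cat.of (Arrow E) ⟶ Cat.of E from (Arrow.rightFunc : Arrow E ⥤ E).toCatHom)
        (show Cat.of (Arrow B) ⟶ Cat.of B from (Arrow.rightFunc : Arrow B ⥤ B).toCatHom)
        (show Cat.of E ⟶ Cat.of B from p.toCatHom) := by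
  have w : p.mapArrow ⋙ Arrow.rightFunc = Arrow.rightFunc ⋙ p := rfl
  refine Iff.trans ?_ (Cat.isPullback_iff_existsUnique_lift w).symm
  constructor
  · intro hp X _
    exact existsUnique_strictPullback_lift w (isDiscreteFibration_iff_existsUnique_arrow.1 hp)
      fun α β h => hp.existsUnique_arrowHom_lift α β (eq_of_heq h)
  · intro hlift
    exact isDiscreteFibration_iff_existsUnique_arrow.2
      (Cat.existsUnique_obj_of_forall_existsUnique_lift hlift)
end

section
/- Let C be a small category, F, G : Cᵒᵖ ⥤ Type presheaves on C, and φ : F ⟶ G a morphism of presheaves. Let c, d be objects of C, x an element of F(c), y an element of G(d), and f : c ⟶ d a morphism of C with G(f)(y) = φ_c(x), so that f determines a morphism (c, φ_c(x)) ⟶ (d, y) in the category of elements of G. Then the following are equivalent: (i) the pair ((c, x), f) is a universal arrow from the induced functor ∫φ : ∫F ⥤ ∫G on categories of elements to the object (d, y) of ∫G (equivalently, the corresponding object of the comma category (∫φ ↓ (d, y)) is terminal); (ii) the square of presheaves whose top edge is the Yoneda-classifying map x̃ : y(c) ⟶ F of x, whose left edge is y(f) : y(c) ⟶ y(d), whose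 right edge is φ : F ⟶ G, and whose bottom edge is the Yoneda-classifying map ỹ : y(d) ⟶ G of y, is a pullback square in the category of presheaves on C. -/
open CategoryTheory CategoryTheory.Limits Opposite

universe u

/-- The category of elements of a presheaf `F : Cᵒᵖ ⥤ Type u`, with objects pairs
`(c, x ∈ F(c))` and morphisms `(c, x) ⟶ (d, y)` the morphisms `f : c ⟶ d` of `C` with
`F(f)(y) = x`. -/
structure PElt {C : Type u} [SmallCategory C] (F : Cᵒᵖ ⥤ Type u) : Type u where
  base : C
  elt : F.obj (op base)

namespace PElt

variable {C : Type u} [SmallCategory C]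

instance (F : Cᵒᵖ ⥤ Type u) : Category (PElt F) where
  Hom x y := { f : x.base ⟶ y.base // F.map f.op y.elt = x.elt }
  id x := ⟨𝟙 x.base, by rw [op_id, FunctorToTypes.map_id_apply]⟩
  comp {x y z} f g := ⟨f.1 ≫ g.1, by rw [op_comp, FunctorToTypes.map_comp_apply, g.2, f.2]⟩
  id_comp f := Subtype.ext (Category.id_comp f.1)
  comp_id f := Subtype.ext (Category.comp_id f.1)
  assoc f g h := Subtype.ext (Category.assoc f.1 g.1 h.1)

/-- The functor `∫φ : ∫F ⥤ ∫G` on categories of elements induced by a morphism of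
presheaves `φ : F ⟶ G`, sending `(c, x)` to `(c, φ_c(x))`. -/
def map {F G : Cᵒᵖ ⥤ Type u} (φ : F ⟶ G) : PElt F ⥤ PElt G where
  obj x := ⟨x.base, φ.app _ x.elt⟩
  map {x y} f := ⟨f.1, by rw [← FunctorToTypes.naturality, f.2]⟩
  map_id _ := rfl
  map_comp _ _ := rfl

/-- The projection `π : ∫F ⥤ C` from the category of elements of a presheaf. -/
def proj (F : Cᵒᵖ ⥤ Type u) : PElt F ⥤ C where
  obj x := x.base
  map f := f.1
  map_id _ := rfl
  map_comp _ _ := rfl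

theorem map_comp' {F G H : Cᵒᵖ ⥤ Type u} (φ : F ⟶ G) (ψ : G ⟶ H) :
    PElt.map (φ ≫ ψ) = PElt.map φ ⋙ PElt.map ψ := rfl

end PElt

/-!
Both conditions unfold to the same elementwise statement. Pullbacks of presheaves are computed
objectwise, and at `e` the square says that every pair `(a ∈ F(e), h : e ⟶ d)` with
`φ(a) = G(h)(y)` comes from a unique `g : e ⟶ c`, via `a = F(g)(x)` and `h = g ≫ f`. Such pairs are
exactly the objects of the comma category `(∫φ ↓ (d, y))`, and such `g` its morphisms into
`((c, x), f)`, so this is also what terminality of `((c, x), f)` means.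
-/

universe v w

section UniqueLifts

variable {C : Type w} [Category.{v} C] {F G : Cᵒᵖ ⥤ Type v} {c d : C}

/-- In terms of elements: `(e, a) ∈ ∫F`, `h : (e, φ a) ⟶ (d, y)` in `∫G`, and `g` a morphism
`(e, a) ⟶ (c, x)` of `∫F` lying over `h`. -/
def HasUniqueLifts (φ : F ⟶ G) (x : F.obj (op c)) (y : G.obj (op d)) (f : c ⟶ d) : Prop :=
  ∀ ⦃e : C⦄ (a : F.obj (op e)) (h : e ⟶ d), G.map h.op y = φ.app (op e) a →
    ∃! g : e ⟶ c, F.map g.op x = a ∧ g ≫ f = h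

variable {φ : F ⟶ G} {x : F.obj (op c)} {y : G.obj (op d)} {f : c ⟶ d}

theorem yonedaEquiv_symm_comp_eq (hf : G.map f.op y = φ.app (op c) x) :
    yonedaEquiv.symm x ≫ φ = yoneda.map f ≫ yonedaEquiv.symm y := by
  rw [yonedaEquiv_symm_naturality_right, yonedaEquiv_symm_naturality_left, hf]

theorem isPullback_iff_hasUniqueLifts (hf : G.map f.op y = φ.app (op c) x) :
    IsPullback (yonedaEquiv.symm x) (yoneda.map f) φ (yonedaEquiv.symm y) ↔
      HasUniqueLifts φ x y f := by
  have comm := yonedaEquiv_symm_comp_eq hf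
  refine ⟨fun hp e a h hh => ?_, fun hl => .of_forall_isPullback_app fun e => ?_⟩
  · obtain ⟨-, hinj, hex⟩ := (Types.isPullback_iff _ _ _ _).1 (hp.app (op e))
    obtain ⟨g, hga, hgf⟩ := hex a h hh.symm
    exact ⟨g, ⟨hga, hgf⟩, fun g' ⟨hga', hgf'⟩ =>
      hinj g' g ⟨hga'.trans hga.symm, hgf'.trans hgf.symm⟩⟩
  · refine (Types.isPullback_iff _ _ _ _).2 ⟨congr_app comm e, ?_, ?_⟩
    · rintro g g' ⟨hx, hgf⟩
      obtain ⟨_, -, huniq⟩ := hl (F.map g.op x) (g ≫ f)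
        (ConcreteCategory.congr_hom (congr_app comm e) g).symm
      exact (huniq g ⟨rfl, rfl⟩).trans (huniq g' ⟨hx.symm, hgf.symm⟩).symm
    · intro a h hh
      obtain ⟨g, hg, -⟩ := hl a h hh.symm
      exact ⟨g, hg⟩

end UniqueLifts

namespace PElt

variable {C : Type u} [SmallCategory C] {F G : Cᵒᵖ ⥤ Type u} {φ : F ⟶ G} {c d : C}
  {x : F.obj (op c)} {y : G.obj (op d)} {f : c ⟶ d}

theorem nonempty_isTerminal_costructuredArrow_iff (hf : G.map f.op y = φ.app (op c) x) :
    Nonempty (IsTerminal (CostructuredArrow.mk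
      (S := map φ) (T := (⟨d, y⟩ : PElt G)) (Y := (⟨c, x⟩ : PElt F)) ⟨f, hf⟩)) ↔
      HasUniqueLifts φ x y f := by
  let X := CostructuredArrow.mk
    (S := map φ) (T := (⟨d, y⟩ : PElt G)) (Y := (⟨c, x⟩ : PElt F)) ⟨f, hf⟩
  have spec {A : CostructuredArrow (map φ) ⟨d, y⟩} (m : A ⟶ X) :
      F.map m.left.1.op x = A.left.elt ∧ m.left.1 ≫ f = A.hom.1 :=
    ⟨m.left.2, congrArg Subtype.val (CostructuredArrow.w m)⟩
  constructor
  · rintro ⟨hX⟩ e a h hh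
    let A := CostructuredArrow.mk
      (S := map φ) (T := (⟨d, y⟩ : PElt G)) (Y := (⟨e, a⟩ : PElt F)) ⟨h, hh⟩
    refine ⟨(hX.from A).left.1, spec (hX.from A), fun g ⟨hga, hgf⟩ => ?_⟩
    let m : A ⟶ X := CostructuredArrow.homMk ⟨g, hga⟩ (Subtype.ext hgf)
    exact congrArg (fun m => m.left.1) (hX.hom_ext m (hX.from A))
  · intro hl
    choose g hg huniq using
      fun A : CostructuredArrow (map φ) ⟨d, y⟩ => hl A.left.elt A.hom.1 A.hom.2
    exact ⟨.ofUniqueHom (fun A => CostructuredArrow.homMk ⟨g A, (hg A).1⟩ (Subtype.ext (hg A).2))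
      fun A m => CostructuredArrow.hom_ext _ _ (Subtype.ext (huniq A m.left.1 (spec m)))⟩

end PElt

/-- For a morphism of presheaves `φ : F ⟶ G`, an element `x ∈ F(c)`, an element
`y ∈ G(d)` and `f : c ⟶ d` with `G(f)(y) = φ_c(x)`, the pair `((c, x), f)` is a universal
arrow from `∫φ` to `(d, y)` (i.e. the corresponding object of the comma category
`(∫φ ↓ (d, y))` is terminal) iff the classifying square of presheaves is a pullback. -/
theorem universal_arrow_iff_isPullback {C : Type u} [SmallCategory C]
    {F G : Cᵒᵖ ⥤ Type u} (φ : F ⟶ G) (c d : C) (x : F.obj (op c)) (y : G.obj (op d))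
    (f : c ⟶ d) (hf : G.map f.op y = φ.app (op c) x) :
    Nonempty (IsTerminal (CostructuredArrow.mk
      (S := PElt.map φ) (T := (⟨d, y⟩ : PElt G)) (Y := (⟨c, x⟩ : PElt F)) ⟨f, hf⟩)) ↔
    IsPullback (yonedaEquiv.symm x) (yoneda.map f) φ (yonedaEquiv.symm y) :=
  (PElt.nonempty_isTerminal_costructuredArrow_iff hf).trans
    (isPullback_iff_hasUniqueLifts hf).symm
end

section
/- Let C be a small category, F, G : Cᵒᵖ ⥤ Type presheaves on C, and φ : F ⟶ G a morphism of presheaves. Then the induced functor ∫φ : ∫F ⥤ ∫G on categories of elements has a right adjoint if and only if, for every object c of C and every morphism η : y(c) ⟶ G of presheaves, the pullback presheaf F ×_G y(c) (the pullback of φ : F ⟶ G along η in the category of presheaves on C) is a representable presheaf. -/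
open CategoryTheory CategoryTheory.Limits Opposite

universe u

/-!
By the pointwise criterion for adjoints, `∫φ` has a right adjoint iff every comma category
`∫φ ↓ (c, t)` has a terminal object. An object of `∫φ ↓ (c, t)` is an element `x ∈ F(b)`
together with `f : b ⟶ c` such that `φ(x) = G(f)(t)`, i.e. an element of `F ×_G y(c)` at `b`
(with `η : y(c) ⟶ G` corresponding to `t`), so `∫φ ↓ (c, t) ≌ ∫(F ×_G y(c))`. Finally, a presheaf
is representable iff its category of elements has a terminal object, a universal element.
-/

section PresheafPullback

variable {C : Type u} [SmallCategory C] {F G : Cᵒᵖ ⥤ Type u} (φ : F ⟶ G) {c : C}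
  (η : yoneda.obj c ⟶ G)

-- Elements of a presheaf at `b` are maps out of `y(b)`, so the universal property of the
-- pullback describes them.
theorem pullback_elt_ext {b : C} {k k' : (pullback φ η).obj (op b)}
    (h₁ : (pullback.fst φ η).app (op b) k = (pullback.fst φ η).app (op b) k')
    (h₂ : (pullback.snd φ η).app (op b) k = (pullback.snd φ η).app (op b) k') : k = k' := by
  apply yonedaEquiv.symm.injective
  apply pullback.hom_ext
  · rw [yonedaEquiv_symm_naturality_right, yonedaEquiv_symm_naturality_right, h₁]
  · rw [yonedaEquiv_symm_naturality_right, yonedaEquiv_symm_naturality_right, h₂]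

theorem pullback_elt_condition {b : C} (k : (pullback φ η).obj (op b)) :
    φ.app (op b) ((pullback.fst φ η).app (op b) k) =
      G.map ((pullback.snd φ η).app (op b) k).op (yonedaEquiv η) := by
  rw [map_yonedaEquiv, ← NatTrans.comp_app_apply, pullback.condition, NatTrans.comp_app_apply]

end PresheafPullback

namespace PElt

section Representable

variable {C : Type u} [SmallCategory C] {P : Cᵒᵖ ⥤ Type u}

noncomputable def representableByOfIsTerminal {X : PElt P} (hX : IsTerminal X) :
    P.RepresentableBy X.base where
  homEquiv {b} := Equiv.ofBijective (fun g => P.map g.op X.elt)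
    ⟨fun g g' h => congrArg Subtype.val
        (hX.hom_ext (⟨g, rfl⟩ : (⟨b, P.map g.op X.elt⟩ : PElt P) ⟶ X) ⟨g', h.symm⟩),
      fun x => ⟨(hX.from ⟨b, x⟩).1, (hX.from ⟨b, x⟩).2⟩⟩
  homEquiv_comp f g := by
    change P.map (f ≫ g).op X.elt = P.map f.op (P.map g.op X.elt)
    rw [op_comp, Functor.map_comp_apply]

def isTerminalOfRepresentableBy {d : C} (r : P.RepresentableBy d) :
    IsTerminal (⟨d, r.homEquiv (𝟙 d)⟩ : PElt P) :=
  IsTerminal.ofUniqueHom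
    (fun x => ⟨r.homEquiv.symm x.elt, by rw [← r.homEquiv_eq, Equiv.apply_symm_apply]⟩)
    (fun _ m => Subtype.ext (r.homEquiv.eq_symm_apply.2 (by rw [r.homEquiv_eq]; exact m.2)))

theorem isRepresentable_iff_hasTerminal : P.IsRepresentable ↔ HasTerminal (PElt P) :=
  ⟨fun _ => (isTerminalOfRepresentableBy P.representableBy).hasTerminal,
    fun _ => (representableByOfIsTerminal terminalIsTerminal).isRepresentable⟩

end Representable

section PresheafPullback

variable {C : Type u} [SmallCategory C] {F G : Cᵒᵖ ⥤ Type u} (φ : F ⟶ G) {c : C}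
  (η : yoneda.obj c ⟶ G)

-- An element of `F ×_G y(c)` at `b` is a pair `(x, f : b ⟶ c)` with `φ(x) = G(f)(η)`, that is,
-- a morphism `∫φ(b, x) ⟶ (c, η)`.
noncomputable def pullbackEltOfHom {x : PElt F} (f : (map φ).obj x ⟶ ⟨c, yonedaEquiv η⟩) :
    (pullback φ η).obj (op x.base) :=
  yonedaEquiv (pullback.lift (yonedaEquiv.symm x.elt) (yoneda.map f.1) (by
    apply yonedaEquiv.injective
    rw [yonedaEquiv_comp, yonedaEquiv_comp, Equiv.apply_symm_apply]
    exact f.2.symm.trans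
      ((map_yonedaEquiv η f.1).trans (congrArg _ (yonedaEquiv_yoneda_map _).symm))))

theorem pullbackEltOfHom_fst {x : PElt F} (f : (map φ).obj x ⟶ ⟨c, yonedaEquiv η⟩) :
    (pullback.fst φ η).app (op x.base) (pullbackEltOfHom φ η f) = x.elt := by
  rw [pullbackEltOfHom, ← yonedaEquiv_comp, pullback.lift_fst, Equiv.apply_symm_apply]

theorem pullbackEltOfHom_snd {x : PElt F} (f : (map φ).obj x ⟶ ⟨c, yonedaEquiv η⟩) :
    (pullback.snd φ η).app (op x.base) (pullbackEltOfHom φ η f) = f.1 := by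
  rw [pullbackEltOfHom, ← yonedaEquiv_comp, pullback.lift_snd]
  exact yonedaEquiv_yoneda_map _

theorem map_pullbackEltOfHom_eq_iff {x y : PElt F} (g : x.base ⟶ y.base)
    (f : (map φ).obj x ⟶ ⟨c, yonedaEquiv η⟩) (f' : (map φ).obj y ⟶ ⟨c, yonedaEquiv η⟩) :
    (pullback φ η).map g.op (pullbackEltOfHom φ η f') = pullbackEltOfHom φ η f ↔
      F.map g.op y.elt = x.elt ∧ g ≫ f'.1 = f.1 := by
  constructor
  · intro h
    have h₁ := congrArg ((pullback.fst φ η).app _) h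
    have h₂ := congrArg ((pullback.snd φ η).app _) h
    rw [NatTrans.naturality_apply, pullbackEltOfHom_fst, pullbackEltOfHom_fst] at h₁
    rw [NatTrans.naturality_apply, pullbackEltOfHom_snd, pullbackEltOfHom_snd] at h₂
    exact ⟨h₁, h₂⟩
  · rintro ⟨h₁, h₂⟩
    apply pullback_elt_ext
    · rw [NatTrans.naturality_apply, pullbackEltOfHom_fst, pullbackEltOfHom_fst, h₁]
    · rw [NatTrans.naturality_apply, pullbackEltOfHom_snd, pullbackEltOfHom_snd]
      exact h₂

theorem pullbackEltOfHom_fst_snd {b : C} (k : (pullback φ η).obj (op b)) :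
    pullbackEltOfHom φ η (x := ⟨b, (pullback.fst φ η).app _ k⟩)
      ⟨(pullback.snd φ η).app _ k, (pullback_elt_condition φ η k).symm⟩ = k :=
  pullback_elt_ext φ η (pullbackEltOfHom_fst ..) (pullbackEltOfHom_snd ..)

noncomputable def costructuredArrowToPullback :
    CostructuredArrow (map φ) (⟨c, yonedaEquiv η⟩ : PElt G) ⥤ PElt (pullback φ η) where
  obj A := ⟨A.left.base, pullbackEltOfHom φ η A.hom⟩
  map m := ⟨m.left.1, (map_pullbackEltOfHom_eq_iff φ η _ _ _).2
    ⟨m.left.2, congrArg Subtype.val (CostructuredArrow.w m)⟩⟩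

instance : (costructuredArrowToPullback φ η).Faithful where
  map_injective h := CostructuredArrow.hom_ext _ _ (Subtype.ext (congrArg Subtype.val h :))

instance : (costructuredArrowToPullback φ η).Full where
  map_surjective {A B} f := by
    obtain ⟨h₁, h₂⟩ := (map_pullbackEltOfHom_eq_iff φ η f.1 A.hom B.hom).1 f.2
    exact ⟨CostructuredArrow.homMk ⟨f.1, h₁⟩ (Subtype.ext h₂), rfl⟩

instance : (costructuredArrowToPullback φ η).EssSurj where
  mem_essImage k := ⟨CostructuredArrow.mk (Y := ⟨k.base, (pullback.fst φ η).app _ k.elt⟩)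
    ⟨(pullback.snd φ η).app _ k.elt, (pullback_elt_condition φ η k.elt).symm⟩,
    ⟨eqToIso (congrArg (PElt.mk k.base) (pullbackEltOfHom_fst_snd φ η k.elt))⟩⟩

instance : (costructuredArrowToPullback φ η).IsEquivalence where

theorem hasTerminal_costructuredArrow_iff :
    HasTerminal (CostructuredArrow (map φ) (⟨c, yonedaEquiv η⟩ : PElt G)) ↔
      (pullback φ η).IsRepresentable :=
  (costructuredArrowToPullback φ η).asEquivalence.hasTerminal_iff.trans
    isRepresentable_iff_hasTerminal.symm

end PresheafPullback

end PElt

/-- A morphism of presheaves `φ : F ⟶ G` is representable (the induced functor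
`∫φ : ∫F ⥤ ∫G` has a right adjoint) iff for every `c : C` and every
`η : y(c) ⟶ G` the pullback presheaf `F ×_G y(c)` is representable. -/
theorem representable_map_iff {C : Type u} [SmallCategory C]
    {F G : Cᵒᵖ ⥤ Type u} (φ : F ⟶ G) :
    (PElt.map φ).IsLeftAdjoint ↔
      ∀ (c : C) (η : yoneda.obj c ⟶ G), (pullback φ η).IsRepresentable := by
  rw [isLeftAdjoint_iff_hasTerminal_costructuredArrow]
  refine ⟨fun h c η => (PElt.hasTerminal_costructuredArrow_iff φ η).1 (h _), fun h ⟨c, x⟩ => ?_⟩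
  obtain ⟨η, rfl⟩ := yonedaEquiv.surjective x
  exact (PElt.hasTerminal_costructuredArrow_iff φ η).2 (h c η)
end

section
/- Let C be a small category and let a commutative square of presheaves on C be given, with top edge α : F' ⟶ F, left edge φ' : F' ⟶ G', right edge φ : F ⟶ G, and bottom edge β : G' ⟶ G. Suppose the induced functors on categories of elements admit right adjoints, ∫φ ⊣ R and ∫φ' ⊣ R' (with unit η and counit ε' respectively). Note that ∫α ⋙ ∫φ = ∫φ' ⋙ ∫β strictly, by commutativity of the square. Let μ : R' ⋙ ∫α ⟶ ∫β ⋙ R be the canonical mate transformation, given as the composite R' ⋙ ∫α ⟶ R' ⋙ ∫α ⋙ ∫φ ⋙ R = R' ⋙ ∫φ' ⋙ ∫β ⋙ R ⟶ ∫β ⋙ R obtained from the unit η of ∫φ ⊣ R followed by the counit ε' of ∫φ' ⊣ R'. Then the square is a pullback square in the category of presheaves on C if and only if μ is a natural isomorphism (the Beck–Chevalley condition). -/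
open CategoryTheory CategoryTheory.Limits Opposite

universe u

/-!
For `x = (d, f)` in `∫F` and `y' = (c, g')` in `∫G'`, the adjunctions identify maps
`x ⟶ ∫α (R' y')` with pairs `(f', k)`, where `f' ∈ F'(d)` lies over `f` and `k : d ⟶ c`
satisfies `G'(k) g' = φ'(f')`, and maps `x ⟶ R (∫β y')` with the `k : d ⟶ c` such that
`β (G'(k) g') = φ(f)`; composing with the mate forgets `f'`. By Yoneda the mate is invertible
iff all these maps are bijective, i.e. iff `f'` always exists and is unique, which is the
objectwise description of a pullback of presheaves.
-/

open Function

namespace PElt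

variable {C : Type u} [SmallCategory C]

lemma hom_ext {F : Cᵒᵖ ⥤ Type u} {x y : PElt F} {f g : x ⟶ y} (h : f.1 = g.1) : f = g :=
  Subtype.ext h

lemma eqToHom_val {F : Cᵒᵖ ⥤ Type u} {x y : PElt F} (h : x = y) :
    (eqToHom h).1 = eqToHom (congrArg base h) := by
  subst h
  rfl

section Adjunction

variable {F G : Cᵒᵖ ⥤ Type u} {φ : F ⟶ G} {R : PElt G ⥤ PElt F} (adj : PElt.map φ ⊣ R)

lemma hom_ext_of_comp_counit {x : PElt F} {z : PElt G} {p q : x ⟶ R.obj z}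
    (h : p.1 ≫ (adj.counit.app z).1 = q.1 ≫ (adj.counit.app z).1) : p = q := by
  apply (adj.homEquiv x z).symm.injective
  rw [Adjunction.homEquiv_counit, Adjunction.homEquiv_counit]
  exact hom_ext h

lemma exists_comp_counit_eq {x : PElt F} {z : PElt G} (k : x.base ⟶ z.base)
    (hk : G.map k.op z.elt = φ.app _ x.elt) :
    ∃ p : x ⟶ R.obj z, p.1 ≫ (adj.counit.app z).1 = k := by
  refine ⟨adj.homEquiv x z ⟨k, hk⟩, ?_⟩
  have := (adj.homEquiv x z).symm_apply_apply ⟨k, hk⟩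
  rw [Adjunction.homEquiv_counit] at this
  exact congrArg Subtype.val this

lemma app_map_obj_elt {z : PElt G} {d : C} (k : d ⟶ (R.obj z).base) :
    φ.app _ (F.map k.op (R.obj z).elt) = G.map (k ≫ (adj.counit.app z).1).op z.elt :=
  calc φ.app _ (F.map k.op (R.obj z).elt)
      _ = G.map k.op (φ.app _ (R.obj z).elt) := NatTrans.naturality_apply φ k.op _
      _ = G.map k.op (G.map (adj.counit.app z).1.op z.elt) := congrArg _ (adj.counit.app z).2.symm
      _ = G.map (k ≫ (adj.counit.app z).1).op z.elt := (Functor.map_comp_apply G _ _ _).symm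

end Adjunction

section BeckChevalley

variable {F F' G G' : Cᵒᵖ ⥤ Type u}
  {α : F' ⟶ F} {φ' : F' ⟶ G'} {φ : F ⟶ G} {β : G' ⟶ G}
  {R : PElt G ⥤ PElt F} {R' : PElt G' ⥤ PElt F'}
  (adj : PElt.map φ ⊣ R) (adj' : PElt.map φ' ⊣ R')
  (heq : PElt.map α ⋙ PElt.map φ = PElt.map φ' ⋙ PElt.map β)

lemma mate_app_comp_counit (y' : PElt G') :
    ((mateEquiv adj' adj (eqToHom heq)).app y').1 ≫ (adj.counit.app ((map β).obj y')).1 =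
      (adj'.counit.app y').1 := by
  have := congrArg Subtype.val (mateEquiv_counit adj' adj (eqToHom heq) y')
  -- `∫α ⋙ ∫φ` and `∫φ' ⋙ ∫β` agree on bases, so the `eqToHom` is an identity there.
  have hid : ((eqToHom heq).app (R'.obj y')).1 = 𝟙 (R'.obj y').base := by
    rw [eqToHom_app, eqToHom_val]
    rfl
  exact this.trans ((congrArg (· ≫ (adj'.counit.app y').1) hid).trans (Category.id_comp _))

local notation "μ" => NatTrans.app (mateEquiv adj' adj (eqToHom heq))

lemma comp_mate_app_comp_counit {x : PElt F} {y' : PElt G'}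
    (p : x ⟶ (map α).obj (R'.obj y')) :
    (p ≫ μ y').1 ≫ (adj.counit.app ((map β).obj y')).1 = p.1 ≫ (adj'.counit.app y').1 :=
  (Category.assoc _ _ _).trans (congrArg (p.1 ≫ ·) (mate_app_comp_counit adj adj' heq y'))

lemma injective_comp_mate_app {x : PElt F} (y' : PElt G')
    (hinj : ∀ f₁ f₂ : F'.obj (op x.base),
      α.app _ f₁ = α.app _ f₂ ∧ φ'.app _ f₁ = φ'.app _ f₂ → f₁ = f₂) :
    Injective fun p : x ⟶ (map α).obj (R'.obj y') => p ≫ μ y' := by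
  intro p q hpq
  have hcomp : p.1 ≫ (adj'.counit.app y').1 = q.1 ≫ (adj'.counit.app y').1 :=
    (comp_mate_app_comp_counit adj adj' heq p).symm.trans
      ((congrArg (fun r => r.1 ≫ (adj.counit.app ((map β).obj y')).1) hpq).trans
        (comp_mate_app_comp_counit adj adj' heq q))
  have hlift : F'.map p.1.op (R'.obj y').elt = F'.map q.1.op (R'.obj y').elt := by
    refine hinj _ _ ⟨?_, ?_⟩
    · calc α.app _ (F'.map p.1.op (R'.obj y').elt)
          _ = x.elt := (NatTrans.naturality_apply α _ _).trans p.2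
          _ = α.app _ (F'.map q.1.op (R'.obj y').elt) :=
            (NatTrans.naturality_apply α _ _).trans q.2 |>.symm
    · calc φ'.app _ (F'.map p.1.op (R'.obj y').elt)
          _ = G'.map (p.1 ≫ (adj'.counit.app y').1).op y'.elt := app_map_obj_elt adj' p.1
          _ = G'.map (q.1 ≫ (adj'.counit.app y').1).op y'.elt :=
            congrArg (fun k => G'.map k.op y'.elt) hcomp
          _ = φ'.app _ (F'.map q.1.op (R'.obj y').elt) :=
            (app_map_obj_elt adj' q.1).symm
  have h := hom_ext_of_comp_counit adj'
    (p := (⟨p.1, rfl⟩ : (⟨x.base, F'.map p.1.op (R'.obj y').elt⟩ : PElt F') ⟶ R'.obj y'))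
    (q := ⟨q.1, hlift.symm⟩) hcomp
  exact hom_ext (congrArg Subtype.val h :)

lemma surjective_comp_mate_app {x : PElt F} (y' : PElt G')
    (hex : ∀ (f : F.obj (op x.base)) (g' : G'.obj (op x.base)),
      φ.app _ f = β.app _ g' → ∃ f', α.app _ f' = f ∧ φ'.app _ f' = g') :
    Surjective fun p : x ⟶ (map α).obj (R'.obj y') => p ≫ μ y' := by
  intro t
  let k := t.1 ≫ (adj.counit.app ((map β).obj y')).1
  have hk : φ.app _ x.elt = β.app _ (G'.map k.op y'.elt) :=
    calc φ.app _ x.elt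
        _ = φ.app _ (F.map t.1.op (R.obj ((map β).obj y')).elt) := congrArg _ t.2.symm
        _ = G.map k.op (β.app _ y'.elt) := app_map_obj_elt adj t.1
        _ = β.app _ (G'.map k.op y'.elt) := (NatTrans.naturality_apply β _ _).symm
  obtain ⟨f', hα, hφ'⟩ := hex _ _ hk
  obtain ⟨p, hp⟩ := exists_comp_counit_eq adj' (x := ⟨x.base, f'⟩) (z := y') k hφ'.symm
  refine ⟨⟨p.1, (NatTrans.naturality_apply α _ _).symm.trans ((congrArg _ p.2).trans hα)⟩,
    ?_⟩
  exact hom_ext_of_comp_counit adj ((comp_mate_app_comp_counit adj adj' heq _).trans hp)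

lemma eq_of_injective_comp_mate_app {c : C} {f₁ f₂ : F'.obj (op c)}
    (hα : α.app _ f₁ = α.app _ f₂) (hφ' : φ'.app _ f₁ = φ'.app _ f₂)
    (hinj : Injective fun p : (⟨c, α.app _ f₁⟩ : PElt F) ⟶
      (map α).obj (R'.obj ⟨c, φ'.app _ f₁⟩) => p ≫ μ _) :
    f₁ = f₂ := by
  obtain ⟨p₁, hp₁⟩ := exists_comp_counit_eq adj' (x := ⟨c, f₁⟩) (z := ⟨c, φ'.app _ f₁⟩)
    (𝟙 c) (Functor.map_id_apply _ _ _)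
  obtain ⟨p₂, hp₂⟩ := exists_comp_counit_eq adj' (x := ⟨c, f₂⟩) (z := ⟨c, φ'.app _ f₁⟩)
    (𝟙 c) ((Functor.map_id_apply _ _ _).trans hφ')
  let q₁ : (⟨c, α.app _ f₁⟩ : PElt F) ⟶ (map α).obj (R'.obj ⟨c, φ'.app _ f₁⟩) :=
    (map α).map p₁
  let q₂ : (⟨c, α.app _ f₁⟩ : PElt F) ⟶ (map α).obj (R'.obj ⟨c, φ'.app _ f₁⟩) :=
    ⟨p₂.1, (NatTrans.naturality_apply α _ _).symm.trans ((congrArg _ p₂.2).trans hα.symm)⟩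
  have hq : q₁ = q₂ := hinj <| hom_ext_of_comp_counit adj <|
    ((comp_mate_app_comp_counit adj adj' heq q₁).trans hp₁).trans
      ((comp_mate_app_comp_counit adj adj' heq q₂).trans hp₂).symm
  calc f₁ = F'.map p₁.1.op (R'.obj ⟨c, φ'.app _ f₁⟩).elt := p₁.2.symm
    _ = F'.map p₂.1.op (R'.obj ⟨c, φ'.app _ f₁⟩).elt :=
      congrArg (fun r => F'.map r.1.op _) hq
    _ = f₂ := p₂.2

lemma exists_of_surjective_comp_mate_app {c : C} {f : F.obj (op c)} {g' : G'.obj (op c)}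
    (hfg : φ.app _ f = β.app _ g')
    (hsurj : Surjective fun p : (⟨c, f⟩ : PElt F) ⟶ (map α).obj (R'.obj ⟨c, g'⟩) =>
      p ≫ μ _) :
    ∃ f', α.app _ f' = f ∧ φ'.app _ f' = g' := by
  obtain ⟨t, ht⟩ := exists_comp_counit_eq adj (x := ⟨c, f⟩) (z := (map β).obj ⟨c, g'⟩)
    (𝟙 c) ((Functor.map_id_apply _ _ _).trans hfg.symm)
  obtain ⟨p, rfl⟩ := hsurj t
  refine ⟨F'.map p.1.op (R'.obj ⟨c, g'⟩).elt,
    (NatTrans.naturality_apply α _ _).trans p.2, ?_⟩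
  calc φ'.app _ (F'.map p.1.op (R'.obj ⟨c, g'⟩).elt)
      _ = G'.map (p.1 ≫ (adj'.counit.app _).1).op g' := app_map_obj_elt adj' p.1
      _ = G'.map (𝟙 c).op g' :=
        congrArg (fun k => G'.map k.op g')
          ((comp_mate_app_comp_counit adj adj' heq p).symm.trans ht)
      _ = g' := Functor.map_id_apply _ _ _

end BeckChevalley

end PElt

/-- Beck–Chevalley: a commutative square of presheaves (top `α`, left `φ'`, right `φ`,
bottom `β`) whose vertical maps are representable (with right adjoints `R`, `R'` of the
induced functors on categories of elements) is a pullback iff the canonical mate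
`R' ⋙ ∫α ⟶ ∫β ⋙ R` (unit of `∫φ ⊣ R`, then the strict equality
`∫α ⋙ ∫φ = ∫φ' ⋙ ∫β`, then counit of `∫φ' ⊣ R'`) is a natural isomorphism. -/
theorem isPullback_iff_beck_chevalley {C : Type u} [SmallCategory C]
    {F F' G G' : Cᵒᵖ ⥤ Type u}
    (α : F' ⟶ F) (φ' : F' ⟶ G') (φ : F ⟶ G) (β : G' ⟶ G)
    (hsq : α ≫ φ = φ' ≫ β)
    (R : PElt G ⥤ PElt F) (R' : PElt G' ⥤ PElt F')
    (adj : PElt.map φ ⊣ R) (adj' : PElt.map φ' ⊣ R') :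
    IsPullback α φ' φ β ↔
      IsIso (mateEquiv adj' adj (eqToHom
        (show PElt.map α ⋙ PElt.map φ = PElt.map φ' ⋙ PElt.map β by
          rw [← PElt.map_comp', ← PElt.map_comp', hsq]))) := by
  refine IsPullback.iff_app.trans (Iff.trans ?_ (NatTrans.isIso_iff_isIso_app _).symm)
  simp only [Types.isPullback_iff, isIso_iff_yoneda_map_bijective]
  constructor
  · intro h y' x
    exact ⟨PElt.injective_comp_mate_app adj adj' _ y' (h _).2.1,
      PElt.surjective_comp_mate_app adj adj' _ y' (h _).2.2⟩
  · intro h c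
    exact ⟨congr_app hsq c,
      fun f₁ f₂ hf => PElt.eq_of_injective_comp_mate_app adj adj' _ hf.1 hf.2 (h _ _).1,
      fun f g' hfg => PElt.exists_of_surjective_comp_mate_app adj adj' _ hfg (h _ _).2⟩
end

section
/- Let C be a small category with a terminal object and F : Cᵒᵖ ⥤ Type a presheaf on C. If the projection functor π : ∫F ⥤ C from the category of elements of F has a right adjoint, then F is a representable presheaf. -/
open CategoryTheory CategoryTheory.Limits Opposite

universe u

/-- If `C` has a terminal object and the projection `π : ∫F ⥤ C` has a right adjoint,
then the presheaf `F` is representable. -/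
theorem representable_of_proj_isLeftAdjoint {C : Type u} [SmallCategory C]
    [HasTerminal C] (F : Cᵒᵖ ⥤ Type u)
    (h : (PElt.proj F).IsLeftAdjoint) : F.IsRepresentable := by
  let adj := Adjunction.ofIsLeftAdjoint (PElt.proj F)
  let R := (PElt.proj F).rightAdjoint
  let T : PElt F := R.obj (⊤_ C)
  -- the canonical morphism to T
  let m : ∀ (X : PElt F), X ⟶ T := fun X => (adj.homEquiv X (⊤_ C)) (terminal.from _)
  have uniq : ∀ (X : PElt F) (g : X ⟶ T), g = m X := by
    intro X g
    have : (adj.homEquiv X (⊤_ C)).symm g = (adj.homEquiv X (⊤_ C)).symm (m X) :=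
      Subsingleton.elim _ _
    exact (adj.homEquiv X (⊤_ C)).symm.injective this
  refine ⟨T.base, ⟨{
    homEquiv := fun {d} => {
      toFun := fun f => F.map f.op T.elt
      invFun := fun u => (m ⟨d, u⟩).1
      left_inv := fun f => by
        have := congrArg Subtype.val (uniq ⟨d, F.map f.op T.elt⟩ ⟨f, rfl⟩)
        exact this.symm
      right_inv := fun u => (m ⟨d, u⟩).2 }
    homEquiv_comp := fun {d e} f g => by
      simp [FunctorToTypes.map_comp_apply] }⟩⟩
end

section
/- Let C be a small category, F, G : Cᵒᵖ ⥤ Type presheaves on C, and φ : F ⟶ G a morphism of presheaves such that the induced functor ∫φ : ∫F ⥤ ∫G has a right adjoint R, with counit ε. Let (d, y) be an object of ∫G, write R(d, y) = (c, x) with x ∈ F(c), and let π : c ⟶ d be the morphism of C underlying the counit component ε_{(d,y)} : (c, φ_c(x)) ⟶ (d, y) in ∫G (so that G(π)(y) = φ_c(x)). Then the square of presheaves whose top edge is the Yoneda-classifying map x̃ : y(c) ⟶ F of x, whose left edge is y(π) : y(c) ⟶ y(d), whose right edge is φ : F ⟶ G, and whose bottom edge is the Yoneda-classifying map ỹ :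 y(d) ⟶ G of y, is a pullback square in the category of presheaves on C. -/
/-!
At a stage `k`, a pair `(z ∈ F(k), f : k ⟶ d)` with `φ(z) = G(f)(y)` is exactly a morphism
`(k, φ z) ⟶ (d, y)` of `∫G`. The adjunction turns it into a unique morphism `(k, z) ⟶ (c, x)`
of `∫F`, i.e. a `g : k ⟶ c` with `F(g)(x) = z`, whose transpose has underlying map `g ≫ π`.
-/

open CategoryTheory CategoryTheory.Limits Opposite

universe u

namespace PElt

variable {C : Type u} [SmallCategory C] {F G : Cᵒᵖ ⥤ Type u} {φ : F ⟶ G}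

theorem commSq_yonedaEquiv_symm {X : PElt F} {Y : PElt G} (h : (map φ).obj X ⟶ Y) :
    CommSq (yonedaEquiv.symm X.elt) (yoneda.map h.1) φ (yonedaEquiv.symm Y.elt) :=
  ⟨(yonedaEquiv_symm_naturality_right _ φ X.elt).trans <|
    (congrArg yonedaEquiv.symm h.2).symm.trans (yonedaEquiv_symm_naturality_left h.1 G Y.elt).symm⟩

variable {R : PElt G ⥤ PElt F} (adj : map φ ⊣ R) {X : PElt F} {Y : PElt G}

theorem homEquiv_symm_val (g : X ⟶ R.obj Y) :
    ((adj.homEquiv X Y).symm g).1 = g.1 ≫ (adj.counit.app Y).1 := by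
  rw [adj.homEquiv_counit]
  rfl

theorem hom_ext_of_comp_counit_s13 {g₁ g₂ : X ⟶ R.obj Y}
    (h : g₁.1 ≫ (adj.counit.app Y).1 = g₂.1 ≫ (adj.counit.app Y).1) : g₁ = g₂ :=
  (adj.homEquiv X Y).symm.injective <| Subtype.ext <| by
    rw [homEquiv_symm_val, homEquiv_symm_val, h]

theorem exists_comp_counit (f : (map φ).obj X ⟶ Y) :
    ∃ g : X ⟶ R.obj Y, g.1 ≫ (adj.counit.app Y).1 = f.1 :=
  ⟨adj.homEquiv X Y f, by rw [← homEquiv_symm_val, Equiv.symm_apply_apply]⟩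

end PElt

/-- For a representable morphism of presheaves `φ : F ⟶ G` with right adjoint `R` of
`∫φ` and counit `ε`, and any object `(d, y)` of `∫G` with `R(d, y) = (c, x)` and
`π : c ⟶ d` the morphism of `C` underlying `ε_{(d,y)}`, the square with top the
classifying map `x̃ : y(c) ⟶ F`, left `y(π)`, right `φ`, and bottom `ỹ : y(d) ⟶ G`,
is a pullback of presheaves. -/
theorem counit_classifying_square_isPullback {C : Type u} [SmallCategory C]
    {F G : Cᵒᵖ ⥤ Type u} (φ : F ⟶ G) (R : PElt G ⥤ PElt F)
    (adj : PElt.map φ ⊣ R) (dy : PElt G) :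
    IsPullback (yonedaEquiv.symm (R.obj dy).elt)
      (yoneda.map (adj.counit.app dy).1)
      φ
      (yonedaEquiv.symm dy.elt) := by
  have w := PElt.commSq_yonedaEquiv_symm (adj.counit.app dy)
  refine .of_forall_isPullback_app fun k ↦
    (Types.isPullback_iff _ _ _ _).2 ⟨congr_app w.w k, ?_, ?_⟩
  · rintro (g₁ : k.unop ⟶ _) (g₂ : k.unop ⟶ _) ⟨hx : F.map g₁.op _ = F.map g₂.op _, hπ⟩
    exact congrArg Subtype.val <| PElt.hom_ext_of_comp_counit_s13 adj (X := ⟨k.unop, _⟩)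
      (g₁ := ⟨g₁, rfl⟩) (g₂ := ⟨g₂, hx.symm⟩) hπ
  · rintro z (f : k.unop ⟶ _) (hzf : φ.app k z = G.map f.op dy.elt)
    obtain ⟨g, hg⟩ := PElt.exists_comp_counit adj (X := ⟨k.unop, z⟩) ⟨f, hzf.symm⟩
    exact ⟨g.1, g.2, hg⟩
end
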